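/- arXiv:2501.12271 — 2 statements merged into one kernel-verified Lean document; each statement's English description precedes it below -/
import Mathlib

section
/- Let H_R, H_A, H_B be finite-dimensional complex Hilbert spaces, let ψ ∈ H_R ⊗ H_A ⊗ H_B be a unit vector, φ = |ψ⟩⟨ψ|, and ω = Tr_R(φ) the reduced density operator on H_A ⊗ H_B. Let {Λ̃_{w_A}}_{w_A ∈ S_A} and {Λ_{w_A}}_{w_A ∈ S_A} be finite families of positive semidefinite operators on H_A, and {Λ_{w_B}}_{w_B ∈ S_B} a finite family of positive semidefinite operators on H_B. Let {|w_A⟩}_{w_A∈S_A} and {|w_B⟩}_{w_B∈S_B} be orthonormal families in auxiliary spaces ℂ^{S_A}, ℂ^{S_B}. Then ∑_{w_A∈S_A} ∑_{w_B∈S_B} ‖√ω ((Λ̃_{w_A} − Λ_{w_A}) ⊗ Λ_{w_B}) √ω‖₁ = ‖∑_{w_A,w_B} (Tr_{AB}{(I_R ⊗ (Λ̃_{w_A} ⊗ Λ_{w_B})) φ} − Tr_{AB}{(I_R ⊗ (Λ_{w_A} ⊗ Λ_{w_B})) φ}) ⊗ |w_A⟩⟨w_A| ⊗ |w_B⟩⟨w_B|‖₁,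 where Tr_{AB} denotes the partial trace over H_A ⊗ H_B (so each such partial trace is an operator on H_R). -/
open scoped Kronecker ComplexOrder

/-- The trace norm (sum of singular values) of a complex square matrix. -/
noncomputable def traceNorm {n : Type*} [Fintype n] [DecidableEq n]
    (M : Matrix n n ℂ) : ℝ :=
  (((Matrix.posSemidef_conjTranspose_mul_self M).1.eigenvectorUnitary : Matrix n n ℂ) *
    Matrix.diagonal (((↑) : ℝ → ℂ) ∘ Real.sqrt ∘ (Matrix.posSemidef_conjTranspose_mul_self M).1.eigenvalues) *
    (star (Matrix.posSemidef_conjTranspose_mul_self M).1.eigenvectorUnitary : Matrix n n ℂ)).trace.re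

-- The positive semidefinite square root of a matrix (junk value `0` if not PSD).
open Classical in
noncomputable def matSqrt {n : Type*} [Fintype n] [DecidableEq n]
    (M : Matrix n n ℂ) : Matrix n n ℂ :=
  if h : M.PosSemidef then
    (h.1.eigenvectorUnitary : Matrix n n ℂ) * Matrix.diagonal (((↑) : ℝ → ℂ) ∘ Real.sqrt ∘ h.1.eigenvalues) *
      (star h.1.eigenvectorUnitary : Matrix n n ℂ) else 0

/-- Partial trace over the first (left) tensor factor. -/
noncomputable def ptraceLeft {R S : Type*} [Fintype R]
    (M : Matrix (R × S) (R × S) ℂ) : Matrix S S ℂ :=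
  Matrix.of fun x y => ∑ r : R, M (r, x) (r, y)

/-- Partial trace over the second (right) tensor factor. -/
noncomputable def ptraceRight {R S : Type*} [Fintype S]
    (M : Matrix (R × S) (R × S) ℂ) : Matrix R R ℂ :=
  Matrix.of fun r r' => ∑ x : S, M (r, x) (r', x)

/-!
Write `ψ` as a matrix `Y : H_R → H_A ⊗ H_B`. Then `ω = Y Y†` and
`Tr_AB((I_R ⊗ A) φ) = (Y† A Y)ᵀ`. For Hermitian `A` the trace norm is the sum of the absolute
values of the roots of the characteristic polynomial, and `charpoly(MN)` and `charpoly(NM)` agree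
up to a power of `X`; so `√ω A √ω`, `A Y Y†` and `Y† A Y` all have the same trace norm, as does
the transpose. Finally the orthonormal classical registers make the cq operator block diagonal,
and the trace norm of a block-diagonal operator is the sum of those of its blocks.
-/

open Matrix Polynomial
open scoped MatrixOrder

namespace Matrix

variable {l m n p : Type*}

lemma PosSemidef.spectral_sqrt_eq_cfcSqrt [Fintype n] [DecidableEq n] {M : Matrix n n ℂ}
    (h : M.PosSemidef) :
    (h.1.eigenvectorUnitary : Matrix n n ℂ) *
        diagonal (((↑) : ℝ → ℂ) ∘ Real.sqrt ∘ h.1.eigenvalues) *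
        (star h.1.eigenvectorUnitary : Matrix n n ℂ) = CFC.sqrt M := by
  rw [CFC.sqrt_eq_cfc, cfc_nnreal_eq_real _ M h.nonneg, h.1.cfc_eq, IsHermitian.cfc,
    Unitary.conjStarAlgAut_apply]
  congr
  funext x
  simp only [Real.sqrt]

lemma sub_kronecker {R : Type*} [NonUnitalNonAssocRing R] (A₁ A₂ : Matrix l m R)
    (B : Matrix n p R) : (A₁ - A₂) ⊗ₖ B = A₁ ⊗ₖ B - A₂ ⊗ₖ B := by
  ext
  simp only [kroneckerMap_apply, sub_apply, sub_mul]

lemma IsHermitian.kronecker {R : Type*} [CommRing R] [StarRing R] {A : Matrix m m R}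
    {B : Matrix n n R} (hA : A.IsHermitian) (hB : B.IsHermitian) : (A ⊗ₖ B).IsHermitian := by
  rw [IsHermitian, conjTranspose_kronecker, hA.eq, hB.eq]

lemma vecMulVec_star_kronecker_vecMulVec_star {R : Type*} [CommSemiring R] [StarRing R]
    (a : m → R) (b : n → R) :
    vecMulVec a (star a) ⊗ₖ vecMulVec b (star b) =
      vecMulVec (fun p : m × n => a p.1 * b p.2) (star fun p : m × n => a p.1 * b p.2) := by
  ext
  simp only [kroneckerMap_apply, vecMulVec_apply, Pi.star_apply, star_mul']
  ring

end Matrix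

section TraceNorm

variable {m n : Type*} [Fintype m] [DecidableEq m] [Fintype n] [DecidableEq n]

lemma matSqrt_eq_cfcSqrt {M : Matrix n n ℂ} (h : M.PosSemidef) : matSqrt M = CFC.sqrt M := by
  rw [matSqrt, dif_pos h, h.spectral_sqrt_eq_cfcSqrt]

lemma traceNorm_eq_re_trace_abs (M : Matrix n n ℂ) : traceNorm M = (CFC.abs M).trace.re := by
  rw [traceNorm, (posSemidef_conjTranspose_mul_self M).spectral_sqrt_eq_cfcSqrt]
  rfl

lemma Matrix.IsHermitian.traceNorm_eq_sum_abs_eigenvalues {M : Matrix n n ℂ}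
    (hM : M.IsHermitian) : traceNorm M = ∑ i, |hM.eigenvalues i| := by
  rw [traceNorm_eq_re_trace_abs, CFC.abs_eq_cfc_norm M hM, hM.cfc_eq, IsHermitian.cfc,
    Unitary.conjStarAlgAut_apply, trace_mul_cycle, Unitary.coe_star_mul_self, one_mul,
    trace_diagonal, Complex.re_sum]
  simp

lemma Matrix.IsHermitian.traceNorm_eq_sum_norm_roots_charpoly {M : Matrix n n ℂ}
    (hM : M.IsHermitian) : traceNorm M = (M.charpoly.roots.map (‖·‖)).sum := by
  rw [hM.traceNorm_eq_sum_abs_eigenvalues, hM.roots_charpoly_eq_eigenvalues, Multiset.map_map,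
    Finset.sum_eq_multiset_sum]
  simp

lemma sum_norm_roots_X_pow_mul {p : ℂ[X]} (hp : p ≠ 0) (a : ℕ) :
    ((X ^ a * p).roots.map (‖·‖)).sum = (p.roots.map (‖·‖)).sum := by
  rw [roots_mul (mul_ne_zero (pow_ne_zero _ X_ne_zero) hp), roots_X_pow, Multiset.map_add,
    Multiset.sum_add, Multiset.map_nsmul, Multiset.sum_nsmul]
  simp

lemma traceNorm_eq_of_X_pow_mul_charpoly_eq {M : Matrix m m ℂ} {N : Matrix n n ℂ}
    (hM : M.IsHermitian) (hN : N.IsHermitian) {a b : ℕ}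
    (h : X ^ a * M.charpoly = X ^ b * N.charpoly) : traceNorm M = traceNorm N := by
  rw [hM.traceNorm_eq_sum_norm_roots_charpoly, hN.traceNorm_eq_sum_norm_roots_charpoly,
    ← sum_norm_roots_X_pow_mul M.charpoly_monic.ne_zero a,
    ← sum_norm_roots_X_pow_mul N.charpoly_monic.ne_zero b, h]

lemma Matrix.IsHermitian.traceNorm_transpose {M : Matrix n n ℂ} (hM : M.IsHermitian) :
    traceNorm Mᵀ = traceNorm M :=
  traceNorm_eq_of_X_pow_mul_charpoly_eq (a := 0) (b := 0) hM.transpose hM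
    (by rw [charpoly_transpose])

lemma traceNorm_cfcSqrt_mul_mul_cfcSqrt (Y : Matrix n m ℂ) {A : Matrix n n ℂ}
    (hA : A.IsHermitian) :
    traceNorm (CFC.sqrt (Y * Yᴴ) * A * CFC.sqrt (Y * Yᴴ)) = traceNorm (Yᴴ * A * Y) := by
  set R := CFC.sqrt (Y * Yᴴ)
  have hR : R.IsHermitian := (CFC.sqrt_nonneg (Y * Yᴴ)).posSemidef.isHermitian
  have hRR : R * R = Y * Yᴴ :=
    CFC.sqrt_mul_sqrt_self _ (posSemidef_self_mul_conjTranspose Y).nonneg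
  have hRAR : (R * A * R).IsHermitian := by
    simpa only [hR.eq] using isHermitian_conjTranspose_mul_mul R hA
  refine traceNorm_eq_of_X_pow_mul_charpoly_eq (a := Fintype.card m) (b := Fintype.card n)
    hRAR (isHermitian_conjTranspose_mul_mul Y hA) ?_
  rw [mul_assoc, charpoly_mul_comm, mul_assoc, hRR, ← Matrix.mul_assoc A, Matrix.mul_assoc Yᴴ]
  exact charpoly_mul_comm' (A * Y) Yᴴ

end TraceNorm

section BlockDiagonal

open Finset

variable {ι m n : Type*} [Fintype ι] [DecidableEq ι] [Fintype m] [Fintype n]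
  {P : ι → Matrix n n ℂ}

lemma sum_kronecker_mul_sum_kronecker (hP : ∀ i j, P i * P j = if i = j then P i else 0)
    (F G : ι → Matrix m m ℂ) :
    (∑ i, F i ⊗ₖ P i) * (∑ j, G j ⊗ₖ P j) = ∑ i, (F i * G i) ⊗ₖ P i := by
  rw [sum_mul_sum]
  refine sum_congr rfl fun i _ => ?_
  rw [sum_eq_single i]
  · rw [← mul_kronecker_mul, hP, if_pos rfl]
  · intro j _ hji
    rw [← mul_kronecker_mul, hP, if_neg (Ne.symm hji), kronecker_zero]
  · exact fun h => absurd (mem_univ i) h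

lemma traceNorm_sum_kronecker [DecidableEq m] [DecidableEq n] (N : ι → Matrix m m ℂ)
    (hPh : ∀ i, (P i).IsHermitian) (hP : ∀ i j, P i * P j = if i = j then P i else 0)
    (hPtr : ∀ i, (P i).trace = 1) :
    traceNorm (∑ i, N i ⊗ₖ P i) = ∑ i, traceNorm (N i) := by
  have hPpsd : ∀ i, (P i).PosSemidef := fun i => by
    simpa only [(hPh i).eq, hP, if_pos] using posSemidef_conjTranspose_mul_self (P i)
  have habs : CFC.abs (∑ i, N i ⊗ₖ P i) = ∑ i, CFC.abs (N i) ⊗ₖ P i := by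
    refine CFC.sqrt_unique ?_ ?_
    · have hstar : star (∑ i, N i ⊗ₖ P i) = ∑ i, star (N i) ⊗ₖ P i := by
        simp only [star_sum, star_eq_conjTranspose, conjTranspose_kronecker, (hPh _).eq]
      simp only [sum_kronecker_mul_sum_kronecker hP, hstar, CFC.abs_mul_abs]
    · exact sum_nonneg fun i _ =>
        ((CFC.abs_nonneg (N i)).posSemidef.kronecker (hPpsd i)).nonneg
  rw [traceNorm_eq_re_trace_abs, habs, trace_sum, Complex.re_sum]
  refine sum_congr rfl fun i _ => ?_
  rw [trace_kronecker, hPtr, mul_one, traceNorm_eq_re_trace_abs]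

end BlockDiagonal

def IsOrthonormalFamily {ι n : Type*} [Fintype n] [DecidableEq ι] (e : ι → n → ℂ) : Prop :=
  ∀ w w', ∑ i, star (e w i) * e w' i = if w = w' then 1 else 0

namespace IsOrthonormalFamily

variable {ι κ n n' : Type*} [Fintype n] [Fintype n'] [DecidableEq ι] [DecidableEq κ]
  {e : ι → n → ℂ} {f : κ → n' → ℂ}

lemma vecMulVec_mul_vecMulVec (he : IsOrthonormalFamily e) (w w' : ι) :
    vecMulVec (e w) (star (e w)) * vecMulVec (e w') (star (e w')) =
      if w = w' then vecMulVec (e w) (star (e w)) else 0 := by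
  rw [Matrix.vecMulVec_mul_vecMulVec, show star (e w) ⬝ᵥ e w' = _ from he w w']
  split_ifs with h
  · rw [h, one_smul]
  · rw [zero_smul]
    exact vecMulVec_zero _

lemma trace_vecMulVec (he : IsOrthonormalFamily e) (w : ι) :
    (vecMulVec (e w) (star (e w))).trace = 1 := by
  rw [Matrix.trace_vecMulVec, dotProduct_comm, show star (e w) ⬝ᵥ e w = _ from he w w,
    if_pos rfl]

lemma prod (he : IsOrthonormalFamily e) (hf : IsOrthonormalFamily f) :
    IsOrthonormalFamily fun (w : ι × κ) (p : n × n') => e w.1 p.1 * f w.2 p.2 := by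
  intro w w'
  have hsplit : ∀ p : n × n', star (e w.1 p.1 * f w.2 p.2) * (e w'.1 p.1 * f w'.2 p.2) =
      (star (e w.1 p.1) * e w'.1 p.1) * (star (f w.2 p.2) * f w'.2 p.2) := fun p => by
    rw [star_mul']; ring
  rw [Fintype.sum_congr _ _ hsplit, Fintype.sum_prod_type]
  dsimp only
  rw [← Finset.sum_mul_sum, he, hf]
  obtain ⟨a, b⟩ := w
  obtain ⟨a', b'⟩ := w'
  by_cases ha : a = a' <;> by_cases hb : b = b' <;> simp [ha, hb]

end IsOrthonormalFamily

section PartialTrace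

variable {R S : Type*} [Fintype R]

lemma ptraceLeft_vecMulVec_star (ψ : R × S → ℂ) :
    ptraceLeft (vecMulVec ψ (star ψ)) =
      (of fun s r => ψ (r, s)) * (of fun s r => ψ (r, s) : Matrix S R ℂ)ᴴ := by
  ext s s'
  simp [ptraceLeft, vecMulVec_apply, mul_apply]

lemma ptraceRight_one_kronecker_mul_vecMulVec_star [Fintype S] [DecidableEq R] (ψ : R × S → ℂ)
    (A : Matrix S S ℂ) :
    ptraceRight ((1 ⊗ₖ A) * vecMulVec ψ (star ψ)) =
      ((of fun s r => ψ (r, s) : Matrix S R ℂ)ᴴ * A * of fun s r => ψ (r, s))ᵀ := by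
  ext r r'
  simp only [ptraceRight, of_apply, mul_apply, transpose_apply, conjTranspose_apply,
    kroneckerMap_apply, vecMulVec_apply, Pi.star_apply, Fintype.sum_prod_type, one_apply,
    ite_mul, one_mul, zero_mul, Finset.sum_mul, Finset.sum_ite_irrel, Finset.sum_const_zero,
    Finset.sum_ite_eq, Finset.mem_univ, if_true]
  rw [Finset.sum_comm]
  refine Finset.sum_congr rfl fun s _ => Finset.sum_congr rfl fun s' _ => ?_
  ring

end PartialTrace

theorem sum_sandwiched_traceNorm_eq_traceNorm_cq_states_general
    {HR HA HB SA SB : Type*}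
    [Fintype HR] [DecidableEq HR] [Fintype HA] [DecidableEq HA]
    [Fintype HB] [DecidableEq HB] [Fintype SA] [DecidableEq SA]
    [Fintype SB] [DecidableEq SB]
    -- the unit vector ψ and its associated pure state φ
    (ψ : HR × HA × HB → ℂ)
    (φ : Matrix (HR × HA × HB) (HR × HA × HB) ℂ)
    (hφ : φ = Matrix.of fun i j => ψ i * star (ψ j))
    -- the reduced density operator on H_A ⊗ H_B
    (ω : Matrix (HA × HB) (HA × HB) ℂ)
    (hω : ω = ptraceLeft φ)
    -- the measurement operator families
    (Λt : SA → Matrix HA HA ℂ) (Λ : SA → Matrix HA HA ℂ)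
    (ΛB : SB → Matrix HB HB ℂ)
    (hΛt : ∀ w, (Λt w).PosSemidef) (hΛ : ∀ w, (Λ w).PosSemidef)
    (hΛB : ∀ w, (ΛB w).PosSemidef)
    -- orthonormal families in the auxiliary spaces ℂ^{S_A} and ℂ^{S_B}
    (eA : SA → SA → ℂ)
    (heA : ∀ w w', (∑ i, star (eA w i) * eA w' i) = if w = w' then 1 else 0)
    (eB : SB → SB → ℂ)
    (heB : ∀ w w', (∑ i, star (eB w i) * eB w' i) = if w = w' then 1 else 0) :
    ∑ wA : SA, ∑ wB : SB,
        traceNorm (matSqrt ω * ((Λt wA - Λ wA) ⊗ₖ ΛB wB) * matSqrt ω)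
      = traceNorm (∑ wA : SA, ∑ wB : SB,
          (ptraceRight (((1 : Matrix HR HR ℂ) ⊗ₖ (Λt wA ⊗ₖ ΛB wB)) * φ)
            - ptraceRight (((1 : Matrix HR HR ℂ) ⊗ₖ (Λ wA ⊗ₖ ΛB wB)) * φ)) ⊗ₖ
          ((Matrix.of fun i j => eA wA i * star (eA wA j)) ⊗ₖ
           (Matrix.of fun i j => eB wB i * star (eB wB j)))) := by
  subst hω
  replace hφ : φ = vecMulVec ψ (star ψ) := hφ
  subst hφ
  set Y : Matrix (HA × HB) HR ℂ := of fun s r => ψ (r, s)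
  set D : SA × SB → Matrix (HA × HB) (HA × HB) ℂ := fun w =>
    (Λt w.1 - Λ w.1) ⊗ₖ ΛB w.2
  set e : SA × SB → SA × SB → ℂ := fun w p => eA w.1 p.1 * eB w.2 p.2
  have he : IsOrthonormalFamily e := IsOrthonormalFamily.prod heA heB
  have hD : ∀ w, (D w).IsHermitian := fun w =>
    ((hΛt w.1).isHermitian.sub (hΛ w.1).isHermitian).kronecker (hΛB w.2).isHermitian
  have hsqrt : matSqrt (ptraceLeft (vecMulVec ψ (star ψ))) = CFC.sqrt (Y * Yᴴ) := by
    rw [ptraceLeft_vecMulVec_star, matSqrt_eq_cfcSqrt (posSemidef_self_mul_conjTranspose Y)]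
  have hcq : ∀ wA wB, ptraceRight ((1 ⊗ₖ (Λt wA ⊗ₖ ΛB wB)) * vecMulVec ψ (star ψ)) -
      ptraceRight ((1 ⊗ₖ (Λ wA ⊗ₖ ΛB wB)) * vecMulVec ψ (star ψ)) =
        (Yᴴ * D (wA, wB) * Y)ᵀ := by
    intro wA wB
    rw [ptraceRight_one_kronecker_mul_vecMulVec_star, ptraceRight_one_kronecker_mul_vecMulVec_star,
      ← transpose_sub, ← Matrix.sub_mul, ← Matrix.mul_sub, ← sub_kronecker]
  calc _ = ∑ w, traceNorm (Yᴴ * D w * Y) := by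
        rw [hsqrt, Fintype.sum_prod_type]
        exact Finset.sum_congr rfl fun wA _ => Finset.sum_congr rfl fun wB _ =>
          traceNorm_cfcSqrt_mul_mul_cfcSqrt Y (hD (wA, wB))
    _ = ∑ w, traceNorm ((Yᴴ * D w * Y)ᵀ) := by
        simp_rw [(isHermitian_conjTranspose_mul_mul Y (hD _)).traceNorm_transpose]
    _ = traceNorm (∑ w, (Yᴴ * D w * Y)ᵀ ⊗ₖ vecMulVec (e w) (star (e w))) :=
        (traceNorm_sum_kronecker _ (fun w => (posSemidef_vecMulVec_self_star _).isHermitian)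
          he.vecMulVec_mul_vecMulVec he.trace_vecMulVec).symm
    _ = _ := by
        rw [Fintype.sum_prod_type]
        exact congrArg traceNorm <| Finset.sum_congr rfl fun wA _ => Finset.sum_congr rfl
          fun wB _ => congrArg₂ (· ⊗ₖ ·) (hcq wA wB).symm
            (vecMulVec_star_kronecker_vecMulVec_star (eA wA) (eB wB)).symm

/-- Lemma (Section IV of the paper, generalizing Lemma 4 of Wilde et al.):
for a purification `φ = |ψ⟩⟨ψ|` of `ω = Tr_R φ`, the sum of sandwiched
trace-norm distances between the two measurement families equals the trace
distance of the corresponding classical-quantum states. -/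
theorem sum_sandwiched_traceNorm_eq_traceNorm_cq_states
    {HR HA HB SA SB : Type*}
    [Fintype HR] [DecidableEq HR] [Fintype HA] [DecidableEq HA]
    [Fintype HB] [DecidableEq HB] [Fintype SA] [DecidableEq SA]
    [Fintype SB] [DecidableEq SB]
    -- the unit vector ψ and its associated pure state φ
    (ψ : HR × HA × HB → ℂ)
    (hψ : ∑ i, Complex.normSq (ψ i) = 1)
    (φ : Matrix (HR × HA × HB) (HR × HA × HB) ℂ)
    (hφ : φ = Matrix.of fun i j => ψ i * star (ψ j))
    -- the reduced density operator on H_A ⊗ H_B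
    (ω : Matrix (HA × HB) (HA × HB) ℂ)
    (hω : ω = ptraceLeft φ)
    -- the measurement operator families
    (Λt : SA → Matrix HA HA ℂ) (Λ : SA → Matrix HA HA ℂ)
    (ΛB : SB → Matrix HB HB ℂ)
    (hΛt : ∀ w, (Λt w).PosSemidef) (hΛ : ∀ w, (Λ w).PosSemidef)
    (hΛB : ∀ w, (ΛB w).PosSemidef)
    -- orthonormal families in the auxiliary spaces ℂ^{S_A} and ℂ^{S_B}
    (eA : SA → SA → ℂ)
    (heA : ∀ w w', (∑ i, star (eA w i) * eA w' i) = if w = w' then 1 else 0)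
    (eB : SB → SB → ℂ)
    (heB : ∀ w w', (∑ i, star (eB w i) * eB w' i) = if w = w' then 1 else 0) :
    ∑ wA : SA, ∑ wB : SB,
        traceNorm (matSqrt ω * ((Λt wA - Λ wA) ⊗ₖ ΛB wB) * matSqrt ω)
      = traceNorm (∑ wA : SA, ∑ wB : SB,
          (ptraceRight (((1 : Matrix HR HR ℂ) ⊗ₖ (Λt wA ⊗ₖ ΛB wB)) * φ)
            - ptraceRight (((1 : Matrix HR HR ℂ) ⊗ₖ (Λ wA ⊗ₖ ΛB wB)) * φ)) ⊗ₖ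
          ((Matrix.of fun i j => eA wA i * star (eA wA j)) ⊗ₖ
           (Matrix.of fun i j => eB wB i * star (eB wB j)))) :=
  sum_sandwiched_traceNorm_eq_traceNorm_cq_states_general ψ φ hφ ω hω Λt Λ ΛB hΛt hΛ hΛB eA heA eB
    heB
end

section
/- Let U be a finite set, W a finite collection of subsets of U, and p_{WU} a probability mass function on W × U such that p_{WU}(w,u) = 0 whenever u ∉ w. Fix δ > 0 and n ∈ ℕ, and suppose the pair sequence ((w_1,u_1),…,(w_n,u_n)) belongs to the strongly typical set T_δ^{(W,U)^n} for p_{WU}. Then u_i ∈ w_i for every i ∈ {1,…,n}. Moreover, let V, Z be finite sets, p a pmf on U × V, and g : U × V → Z, and suppose every w ∈ W is an independent set (for every u, u' ∈ w and v ∈ V with p(u,v) > 0 and p(u',v) > 0, g(u,v) = g(u',v)). If both (w^n, u^n) and (w^n, u'^n) are in T_δ^{(W,U)^n}, and v^n ∈ V^n satisfies ∏_{i=1}^n p(u_i, v_i) > 0 and ∏_{i=1}^n p(u'_i, v_i) > 0, then g(u_i, v_i) = g(u'_i, v_i) for every i. -/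
/-- Strongly typical set (paper's eq:TypDef): for every symbol `a`, if
`q a > 0` then the empirical frequency of `a` is within `δ` of `q a`, and if
`q a = 0` then `a` does not occur. -/
def StronglyTypical {X : Type*} [Fintype X] [DecidableEq X]
    (q : X → ℝ) (δ : ℝ) {n : ℕ} (x : Fin n → X) : Prop :=
  ∀ a : X,
    (0 < q a →
      |(((Finset.univ.filter (fun i => x i = a)).card : ℝ) / n) - q a| ≤ δ) ∧
    (q a = 0 → (Finset.univ.filter (fun i => x i = a)).card = 0)

/-- Analogue of Lemma 4 of Orlitsky–Roche under strong typicality: for a pmf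
`p` on `W × U` (with `W` a finite collection of subsets of `U`) vanishing
whenever `u ∉ w`, jointly typical pair sequences satisfy `u_i ∈ w_i`;
moreover, if all `w ∈ W` are independent sets for `(p₂, g)`, the blockwise
function value `g(u_i, v_i)` depends only on `(w^n, v^n)` among conditionally
typical `u^n` with positive-probability `v^n`. -/
theorem typical_pairs_mem_and_g_consistent
    {U V Z : Type*} [Fintype U] [DecidableEq U] [Fintype V] [DecidableEq V]
    [Fintype Z]
    (𝒲 : Finset (Finset U))
    (p : Finset U × U → ℝ)
    (hp0 : ∀ a, 0 ≤ p a)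
    (hp1 : ∑ a ∈ 𝒲 ×ˢ Finset.univ, p a = 1)
    (hpW : ∀ w u, w ∉ 𝒲 → p (w, u) = 0)
    (hpmem : ∀ w u, u ∉ w → p (w, u) = 0)
    (δ : ℝ) (hδ : 0 < δ) (n : ℕ)
    (p₂ : U → V → ℝ) (hp₂0 : ∀ u v, 0 ≤ p₂ u v) (hp₂1 : ∑ u, ∑ v, p₂ u v = 1)
    (g : U → V → Z)
    -- every member of the collection 𝒲 is an independent set
    (hindep : ∀ w ∈ 𝒲, ∀ u ∈ w, ∀ u' ∈ w, ∀ v : V,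
      0 < p₂ u v → 0 < p₂ u' v → g u v = g u' v) :
    (∀ (w : Fin n → Finset U) (u : Fin n → U),
      StronglyTypical p δ (fun i => (w i, u i)) → ∀ i, u i ∈ w i) ∧
    (∀ (w : Fin n → Finset U) (u u' : Fin n → U) (v : Fin n → V),
      StronglyTypical p δ (fun i => (w i, u i)) →
      StronglyTypical p δ (fun i => (w i, u' i)) →
      0 < ∏ i, p₂ (u i) (v i) →
      0 < ∏ i, p₂ (u' i) (v i) →
      ∀ i, g (u i) (v i) = g (u' i) (v i)) := by
  have key : ∀ (w : Fin n → Finset U) (u : Fin n → U),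
      StronglyTypical p δ (fun i => (w i, u i)) →
      ∀ i, u i ∈ w i ∧ w i ∈ 𝒲 := by
    intro w u htyp i
    have hne : p (w i, u i) ≠ 0 := by
      intro h0
      have hc : (Finset.univ.filter (fun j => ((w j, u j) : Finset U × U) = (w i, u i))).card = 0 :=
        (htyp (w i, u i)).2 h0
      have hi : i ∈ Finset.univ.filter (fun j => ((w j, u j) : Finset U × U) = (w i, u i)) := by
        simp
      have hpos := Finset.card_pos.mpr ⟨i, hi⟩
      omega
    constructor
    · by_contra h; exact hne (hpmem _ _ h)
    · by_contra h; exact hne (hpW _ _ h)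
  refine ⟨fun w u h i => (key w u h i).1, ?_⟩
  intro w u u' v h1 h2 hpu hpu' i
  have h1i := key w u h1 i
  have h2i := key w u' h2 i
  have hv : 0 < p₂ (u i) (v i) := by
    by_contra h
    have : p₂ (u i) (v i) = 0 := le_antisymm (not_lt.mp h) (hp₂0 _ _)
    rw [Finset.prod_eq_zero (Finset.mem_univ i) this] at hpu
    exact lt_irrefl 0 hpu
  have hv' : 0 < p₂ (u' i) (v i) := by
    by_contra h
    have : p₂ (u' i) (v i) = 0 := le_antisymm (not_lt.mp h) (hp₂0 _ _)
    rw [Finset.prod_eq_zero (Finset.mem_univ i) this] at hpu'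
    exact lt_irrefl 0 hpu'
  exact hindep (w i) h1i.2 (u i) h1i.1 (u' i) h2i.1 (v i) hv hv'
end
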